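/- Let c ≥ 1, b ≥ 1/2, 0 < x < 1, and let γ > 0 satisfy γ ≤ x / (4·b·c·log₂(12b/x)). Then h(1/2 − γ) ≥ 1 − x + b·h(c·γ). -/

import Mathlib

/-!
By concavity of `h`, `h(1/2 - γ) ≥ 1 - 2γ`, and the hypothesis gives `2γ ≤ x/2`. With
`y = 12b/x ≥ 4`, the hypothesis also gives `cγ ≤ 3/(y log₂ y) ≤ 1/2`; since `h` increases on
`[0, 1/2]` and `h(u) ≤ u(1 - ln u)/ln 2`, this yields `b·h(cγ) ≤ 6b/y = x/2`.
-/

/-- The binary entropy function `h(p) = −p·log₂ p − (1−p)·log₂(1−p)`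
(with `h(0) = h(1) = 0`, automatic for `Real.logb`). -/
noncomputable def h2 (p : ℝ) : ℝ :=
  -p * Real.logb 2 p - (1 - p) * Real.logb 2 (1 - p)

open Real

lemma h2_eq_binEntropy_div (p : ℝ) : h2 p = binEntropy p / log 2 := by
  simp only [h2, binEntropy, logb, log_inv]
  ring

lemma h2_le_h2 {p q : ℝ} (hp : 0 ≤ p) (hpq : p ≤ q) (hq : q ≤ 1 / 2) : h2 p ≤ h2 q := by
  rw [one_div] at hq
  rw [h2_eq_binEntropy_div, h2_eq_binEntropy_div]
  gcongr
  exact binEntropy_strictMonoOn.monotoneOn ⟨hp, hpq.trans hq⟩ ⟨hp.trans hpq, hq⟩ hpq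

lemma binEntropy_le_mul_one_sub_log {u : ℝ} (hu : u ≤ 1) : binEntropy u ≤ u * (1 - log u) := by
  have := negMulLog_le_one_sub_self (sub_nonneg.2 hu)
  rw [binEntropy_eq_negMulLog_add_negMulLog_one_sub, negMulLog]
  linarith

lemma one_sub_two_mul_le_h2_half_sub {γ : ℝ} (h0 : 0 ≤ γ) (h1 : γ ≤ 1 / 2) :
    1 - 2 * γ ≤ h2 (1 / 2 - γ) := by
  have hconc : 2 * γ * binEntropy 0 + (1 - 2 * γ) * binEntropy 2⁻¹
      ≤ binEntropy (2 * γ * 0 + (1 - 2 * γ) * 2⁻¹) :=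
    strictConcave_binEntropy.concaveOn.2 ⟨le_rfl, zero_le_one⟩ ⟨by norm_num, by norm_num⟩
      (by linarith) (by linarith) (by ring)
  rw [binEntropy_zero, binEntropy_two_inv, mul_zero, zero_add, zero_add,
    show (1 - 2 * γ) * 2⁻¹ = 1 / 2 - γ by ring] at hconc
  rwa [h2_eq_binEntropy_div, le_div_iff₀ (log_pos one_lt_two)]

lemma one_sub_log_div_le {a y : ℝ} (ha : 1 ≤ a) (hy : 1 < y) :
    1 - log (a / (y * log y)) ≤ 2 * log y := by
  have hlogy : 0 < log y := log_pos hy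
  rw [log_div (by positivity) (by positivity), log_mul (by positivity) hlogy.ne']
  have := log_le_sub_one_of_pos hlogy
  have := log_nonneg ha
  linarith

lemma h2_three_div_le {y : ℝ} (hy : 4 ≤ y) : h2 (3 / (y * logb 2 y)) ≤ 6 / y := by
  have hlog2 : 0 < log 2 := log_pos one_lt_two
  have hlogy : 2 * log 2 ≤ log y := by
    rw [← log_rpow two_pos]; exact log_le_log (by norm_num) (by norm_num; linarith)
  have hlogy0 : 0 < log y := by linarith
  have hA : 3 / (y * logb 2 y) = 3 * log 2 / (y * log y) := by
    rw [logb]; field_simp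
  have h3 : 1 ≤ 3 * log 2 := by have := log_two_gt_d9; linarith
  calc h2 (3 / (y * logb 2 y))
      ≤ 3 * log 2 / (y * log y) * (1 - log (3 * log 2 / (y * log y))) / log 2 := by
        rw [h2_eq_binEntropy_div, hA]
        gcongr
        apply binEntropy_le_mul_one_sub_log
        rw [div_le_one (by positivity)]
        nlinarith
    _ ≤ 3 * log 2 / (y * log y) * (2 * log y) / log 2 := by
        gcongr
        exact one_sub_log_div_le h3 (by linarith)
    _ = 6 / y := by field_simp; ring

/-- Let `c ≥ 1`, `b ≥ 1/2`, `0 < x < 1`, and let `γ > 0` satisfy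
`γ ≤ x / (4·b·c·log₂(12b/x))`. Then `h(1/2 − γ) ≥ 1 − x + b·h(c·γ)`. -/
theorem stmt_8 (c b x γ : ℝ) (hc : 1 ≤ c) (hb : 1/2 ≤ b)
    (hx0 : 0 < x) (hx1 : x < 1) (hγ0 : 0 < γ)
    (hγ : γ ≤ x / (4 * b * c * Real.logb 2 (12 * b / x))) :
    h2 (1/2 - γ) ≥ 1 - x + b * h2 (c * γ) := by
  set y := 12 * b / x with hy_def
  set L := logb 2 y
  have hy : 4 ≤ y := by rw [hy_def, le_div_iff₀ hx0]; linarith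
  have hL : 2 ≤ L := (le_logb_iff_rpow_le one_lt_two (by positivity)).2 (by norm_num; linarith)
  have hbc : 1 / 2 ≤ b * c := by nlinarith
  have hbcL : 4 ≤ 4 * b * c * L := by nlinarith
  have hγx : γ ≤ x / 4 := hγ.trans (div_le_div_of_nonneg_left hx0.le (by norm_num) hbcL)
  have hcγ : c * γ ≤ 3 / (y * L) := by
    calc c * γ ≤ c * (x / (4 * b * c * L)) := by gcongr
      _ = 3 / (y * L) := by rw [hy_def]; field_simp; norm_num
  have hA : 3 / (y * L) ≤ 1 / 2 := by
    rw [div_le_div_iff₀ (by positivity) two_pos]; nlinarith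
  have hentropy : b * h2 (c * γ) ≤ x / 2 :=
    calc b * h2 (c * γ) ≤ b * (6 / y) := by
          gcongr
          exact (h2_le_h2 (by positivity) hcγ hA).trans (h2_three_div_le hy)
      _ = x / 2 := by rw [hy_def]; field_simp; ring
  have hhalf := one_sub_two_mul_le_h2_half_sub hγ0.le (by linarith)
  linarith
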